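/- For every x ∈ (0, ∞) one has lim_{α ↓ 0} f_α(x)/α = x⁻¹ e^{−x}. -/

import Mathlib

/-!
Put `u = P_α⁻¹(x)` and `w = v_α(u)`, so that `f_α(x) = π⁻¹ w / (u² + w²)`. For small `α` the point
`u` lies to the right of `-c_α` (otherwise `w = 0` and `P_α(u) ≤ u + α < x`), hence `w > 0` and
`w F(u + iw) = w / α`. The left side is the Poisson integral of `t e^{-t}` at `u + iw`, which is at
most `π`, so `w ≤ π α`. Taking real parts in `H_α(u + iw) = x` gives `x = u + α + α G` with
`|G| ≤ l/2 + F/(2l)` for every `l > 0`, so `|u - x| ≤ α + √α`. As `(u, w) → (x, 0⁺)` the Poisson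
integral tends to `π x e^{-x}` (approximate identity plus the Lipschitz bound for translations), and
`f_α(x)/α = π⁻¹ (w F) / (u² + w²) → x e^{-x} / x²`.
-/

open MeasureTheory Set Filter

/-- `F(x+iy) = ∫₀^∞ t e^{-t}/((x-t)² + y²) dt`. -/
noncomputable def Fint (x y : ℝ) : ℝ :=
  ∫ t in Set.Ioi (0:ℝ), t * Real.exp (-t) / ((x - t)^2 + y^2)

/-- `H_α(z) = z + α + α ∫₀^∞ t e^{-t}/(z-t) dt`. -/
noncomputable def Hfun (α : ℝ) (z : ℂ) : ℂ :=
  z + (α : ℂ) + (α : ℂ) * ∫ t in Set.Ioi (0:ℝ), ((t * Real.exp (-t) : ℝ) : ℂ) / (z - (t : ℂ))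

open scoped Real Topology

lemma add_one_mul_exp_neg_le_one (t : ℝ) : (t + 1) * Real.exp (-t) ≤ 1 := by
  calc (t + 1) * Real.exp (-t) ≤ Real.exp t * Real.exp (-t) := by
        gcongr; exact Real.add_one_le_exp t
    _ = 1 := by rw [← Real.exp_add, add_neg_cancel, Real.exp_zero]

lemma mul_exp_neg_le_one (t : ℝ) : t * Real.exp (-t) ≤ 1 :=
  le_trans (by gcongr; linarith) (add_one_mul_exp_neg_le_one t)

lemma integrableOn_mul_exp_neg : IntegrableOn (fun t : ℝ => t * Real.exp (-t)) (Ioi 0) := by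
  refine (Real.GammaIntegral_convergent two_pos).congr_fun (fun t _ => ?_) measurableSet_Ioi
  norm_num [mul_comm]

lemma integral_mul_exp_neg : ∫ t in Ioi (0:ℝ), t * Real.exp (-t) = 1 := by
  rw [← Real.Gamma_two, Real.Gamma_eq_integral two_pos]
  refine setIntegral_congr_fun measurableSet_Ioi (fun t _ => ?_)
  norm_num [mul_comm]

lemma lipschitzOnWith_mul_exp_neg : LipschitzOnWith 1 (fun t : ℝ => t * Real.exp (-t)) (Ici 0) := by
  refine (convex_Ici 0).lipschitzOnWith_of_nnnorm_hasDerivWithin_le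
    (f' := fun t => (1 - t) * Real.exp (-t)) (fun t _ => ?_) (fun t (ht : 0 ≤ t) => ?_)
  · convert ((hasDerivAt_id' t).fun_mul (hasDerivAt_neg t).exp).hasDerivWithinAt using 1
    ring
  · rw [← NNReal.coe_le_coe, coe_nnnorm, Real.norm_eq_abs, abs_mul, Real.abs_exp, NNReal.coe_one]
    calc |1 - t| * Real.exp (-t) ≤ (t + 1) * Real.exp (-t) := by
          gcongr; rw [abs_le]; constructor <;> linarith
      _ ≤ 1 := add_one_mul_exp_neg_le_one t

noncomputable def gammaWeight : ℝ → ℝ := (Ioi 0).indicator fun t => t * Real.exp (-t)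

lemma gammaWeight_of_pos {t : ℝ} (ht : 0 < t) : gammaWeight t = t * Real.exp (-t) :=
  indicator_of_mem ht _

lemma gammaWeight_eq_max (t : ℝ) : gammaWeight t = max t 0 * Real.exp (-max t 0) := by
  rcases lt_or_ge 0 t with ht | ht
  · simp [gammaWeight, ht, ht.le]
  · simp [gammaWeight, ht, not_lt.2 ht]

lemma gammaWeight_le_one (t : ℝ) : gammaWeight t ≤ 1 := by
  rw [gammaWeight_eq_max]; exact mul_exp_neg_le_one _

lemma lipschitzWith_gammaWeight : LipschitzWith 1 gammaWeight := by
  have h := lipschitzOnWith_mul_exp_neg.comp (LipschitzWith.id.max_const 0).lipschitzOnWith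
    (s := univ) (fun t _ => le_max_right t 0)
  rw [one_mul, lipschitzOnWith_univ] at h
  convert h using 1
  funext t; exact gammaWeight_eq_max t

lemma integrable_gammaWeight : Integrable gammaWeight :=
  (integrable_indicator_iff measurableSet_Ioi).2 integrableOn_mul_exp_neg

/-- The Poisson kernel of the upper half-plane, without the factor `π⁻¹`. -/
noncomputable def poissonKernelUHP (w y : ℝ) : ℝ := w / (y ^ 2 + w ^ 2)

lemma poissonKernelUHP_nonneg {w : ℝ} (hw : 0 ≤ w) (y : ℝ) : 0 ≤ poissonKernelUHP w y := by
  unfold poissonKernelUHP; positivity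

lemma poissonKernelUHP_le_inv {w : ℝ} (hw : 0 < w) (y : ℝ) : poissonKernelUHP w y ≤ w⁻¹ := by
  rw [poissonKernelUHP, div_le_iff₀ (by positivity)]
  field_simp
  nlinarith [sq_nonneg y]

lemma poissonKernelUHP_one (y : ℝ) : poissonKernelUHP 1 y = (1 + y ^ 2)⁻¹ := by
  rw [poissonKernelUHP, one_pow, add_comm, one_div]

lemma poissonKernelUHP_eq_inv_mul {w : ℝ} (hw : w ≠ 0) (y : ℝ) :
    poissonKernelUHP w y = w⁻¹ * poissonKernelUHP 1 (w⁻¹ * y) := by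
  unfold poissonKernelUHP
  field_simp

lemma continuous_poissonKernelUHP {w : ℝ} (hw : w ≠ 0) : Continuous (poissonKernelUHP w) :=
  continuous_const.div (by fun_prop) fun y => by positivity

lemma integrable_poissonKernelUHP {w : ℝ} (hw : w ≠ 0) : Integrable (poissonKernelUHP w) := by
  rw [funext (poissonKernelUHP_eq_inv_mul hw)]
  refine (Integrable.comp_mul_left' ?_ (inv_ne_zero hw)).const_mul _
  exact (funext poissonKernelUHP_one).symm ▸ integrable_inv_one_add_sq

lemma integral_poissonKernelUHP {w : ℝ} (hw : 0 < w) : ∫ y, poissonKernelUHP w y = π := by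
  rw [funext (poissonKernelUHP_eq_inv_mul hw.ne'), integral_const_mul,
    Measure.integral_comp_mul_left, inv_inv, abs_of_pos hw, smul_eq_mul, ← mul_assoc,
    inv_mul_cancel₀ hw.ne', one_mul]
  simpa only [poissonKernelUHP_one] using integral_univ_inv_one_add_sq

lemma tendsto_integral_poissonKernelUHP_mul {g : ℝ → ℝ} {x : ℝ} (hg : Integrable g)
    (hgx : ContinuousAt g x) :
    Tendsto (fun w => ∫ t, poissonKernelUHP w (x - t) * g t) (𝓝[>] 0) (𝓝 (π * g x)) := by
  set ψ : ℝ → ℝ := fun y => π⁻¹ * poissonKernelUHP 1 y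
  have hψ0 (y : ℝ) : 0 ≤ ψ y := mul_nonneg (by positivity) (poissonKernelUHP_nonneg zero_le_one y)
  have hψ1 : ∫ y, ψ y = 1 := by
    rw [integral_const_mul, integral_poissonKernelUHP one_pos, inv_mul_cancel₀ Real.pi_ne_zero]
  have hψ_decay : Tendsto (fun y : ℝ => ‖y‖ ^ Module.finrank ℝ ℝ * ψ y)
      (Bornology.cobounded ℝ) (𝓝 0) := by
    simp only [Module.finrank_self, pow_one]
    refine squeeze_zero (fun y => mul_nonneg (norm_nonneg _) (hψ0 y)) (fun y => ?_)
      (tendsto_inv_atTop_zero.comp (tendsto_norm_cobounded_atTop.const_mul_atTop Real.pi_pos))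
    rcases eq_or_ne y 0 with rfl | hy
    · simp
    have hy' : 0 < ‖y‖ := norm_pos_iff.2 hy
    simp only [Function.comp, ψ, poissonKernelUHP_one, Real.norm_eq_abs] at hy' ⊢
    field_simp
    nlinarith [sq_abs y]
  have h := ((tendsto_integral_comp_smul_smul_of_integrable' hψ0 hψ1 hψ_decay hg hgx).comp
    tendsto_inv_nhdsGT_zero).const_mul π
  refine h.congr' ?_
  filter_upwards [self_mem_nhdsWithin] with w (hw : 0 < w)
  simp only [Function.comp, Module.finrank_self, pow_one, smul_eq_mul, ψ, ← integral_const_mul]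
  congr 1 with t
  rw [poissonKernelUHP_eq_inv_mul hw.ne']
  field_simp

lemma integrable_poissonKernelUHP_mul {g : ℝ → ℝ} (hg : Integrable g) {w : ℝ} (hw : 0 < w)
    (x : ℝ) : Integrable fun t => poissonKernelUHP w (x - t) * g t :=
  hg.bdd_mul
    ((continuous_poissonKernelUHP hw.ne').comp (continuous_sub_left x)).aestronglyMeasurable
    (ae_of_all _ fun t => by
      rw [Real.norm_eq_abs, abs_of_nonneg (poissonKernelUHP_nonneg hw.le _)]
      exact poissonKernelUHP_le_inv hw _)

lemma abs_integral_poissonKernelUHP_mul_sub_le {g : ℝ → ℝ} {L : NNReal} (hg : Integrable g)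
    (hgL : LipschitzWith L g) {w : ℝ} (hw : 0 < w) (u x : ℝ) :
    |(∫ t, poissonKernelUHP w (u - t) * g t) - ∫ t, poissonKernelUHP w (x - t) * g t| ≤
      π * L * |u - x| := by
  have hshift : ∫ t, poissonKernelUHP w (u - t) * g t =
      ∫ t, poissonKernelUHP w (x - t) * g (t + (u - x)) := by
    rw [← integral_add_right_eq_self (fun t => poissonKernelUHP w (u - t) * g t) (u - x)]
    congr 1 with t
    rw [show u - (t + (u - x)) = x - t by ring]
  rw [hshift, ← integral_sub (integrable_poissonKernelUHP_mul (hg.comp_add_right _) hw x)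
    (integrable_poissonKernelUHP_mul hg hw x), ← Real.norm_eq_abs]
  calc ‖∫ t, (poissonKernelUHP w (x - t) * g (t + (u - x)) - poissonKernelUHP w (x - t) * g t)‖
      ≤ ∫ t, poissonKernelUHP w (x - t) * (L * |u - x|) := by
        refine norm_integral_le_of_norm_le
          (((integrable_poissonKernelUHP hw.ne').comp_sub_left x).mul_const _) (ae_of_all _ ?_)
        intro t
        rw [← mul_sub, norm_mul, Real.norm_eq_abs, Real.norm_eq_abs,
          abs_of_nonneg (poissonKernelUHP_nonneg hw.le _)]
        refine mul_le_mul_of_nonneg_left ?_ (poissonKernelUHP_nonneg hw.le _)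
        simpa [Real.dist_eq] using hgL.dist_le_mul (t + (u - x)) t
    _ = π * L * |u - x| := by
        rw [integral_mul_const, integral_sub_left_eq_self, integral_poissonKernelUHP hw]
        ring

lemma mul_Fint_eq (u w : ℝ) :
    w * Fint u w = ∫ t, poissonKernelUHP w (u - t) * gammaWeight t := by
  rw [Fint, ← integral_const_mul, ← integral_indicator measurableSet_Ioi]
  congr 1 with t
  rw [gammaWeight, ← indicator_mul_right _ fun t => poissonKernelUHP w (u - t)]
  congr 1 with t
  rw [poissonKernelUHP]
  ring

lemma mul_Fint_le_pi (u : ℝ) {w : ℝ} (hw : 0 < w) : w * Fint u w ≤ π := by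
  rw [mul_Fint_eq, ← integral_poissonKernelUHP hw, ←
    integral_sub_left_eq_self (poissonKernelUHP w) volume u]
  refine integral_mono (integrable_poissonKernelUHP_mul integrable_gammaWeight hw u)
    ((integrable_poissonKernelUHP hw.ne').comp_sub_left u) fun t => ?_
  exact mul_le_of_le_one_right (poissonKernelUHP_nonneg hw.le _) (gammaWeight_le_one t)

lemma tendsto_mul_Fint {x : ℝ} (hx : 0 < x) :
    Tendsto (fun p : ℝ × ℝ => p.2 * Fint p.1 p.2) (𝓝 x ×ˢ 𝓝[>] 0)
      (𝓝 (π * (x * Real.exp (-x)))) := by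
  have hpeak := (tendsto_integral_poissonKernelUHP_mul integrable_gammaWeight
    lipschitzWith_gammaWeight.continuous.continuousAt (x := x)).comp (tendsto_snd (f := 𝓝 x))
  rw [gammaWeight_of_pos hx] at hpeak
  have hshift : Tendsto (fun p : ℝ × ℝ => π * |p.1 - x|) (𝓝 x ×ˢ 𝓝[>] 0) (𝓝 0) := by
    have : Tendsto (fun u => π * |u - x|) (𝓝 x) (𝓝 0) := by
      simpa using (show Continuous fun u => π * |u - x| by fun_prop).tendsto x
    exact this.comp tendsto_fst
  have hdiff : Tendsto (fun p : ℝ × ℝ =>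
      p.2 * Fint p.1 p.2 - ∫ t, poissonKernelUHP p.2 (x - t) * gammaWeight t)
      (𝓝 x ×ˢ 𝓝[>] 0) (𝓝 0) := by
    refine squeeze_zero_norm' ?_ hshift
    filter_upwards [tendsto_snd.eventually eventually_mem_nhdsWithin] with p (hp : 0 < p.2)
    rw [mul_Fint_eq, Real.norm_eq_abs]
    simpa using abs_integral_poissonKernelUHP_mul_sub_le integrable_gammaWeight
      lipschitzWith_gammaWeight hp p.1 x
  simpa using hdiff.add hpeak

lemma re_Hfun_ofReal_le {α r : ℝ} (hα : 0 ≤ α) (hr : r ≤ 0) : (Hfun α r).re ≤ r + α := by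
  have hint : ∫ t in Ioi (0:ℝ), ((t * Real.exp (-t) : ℝ) : ℂ) / ((r : ℂ) - t) =
      ((∫ t in Ioi (0:ℝ), t * Real.exp (-t) / (r - t) : ℝ) : ℂ) := by
    rw [← integral_complex_ofReal]
    push_cast
    rfl
  have hneg : ∫ t in Ioi (0:ℝ), t * Real.exp (-t) / (r - t) ≤ 0 :=
    setIntegral_nonpos measurableSet_Ioi fun t (ht : 0 < t) =>
      div_nonpos_of_nonneg_of_nonpos (mul_nonneg ht.le (Real.exp_nonneg _)) (by linarith)
  rw [Hfun, hint]
  simp only [Complex.add_re, Complex.mul_re, Complex.ofReal_re, Complex.ofReal_im]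
  nlinarith

lemma integrableOn_mul_exp_neg_div_sq_add_sq (u : ℝ) {w : ℝ} (hw : 0 < w) :
    IntegrableOn (fun t : ℝ => t * Real.exp (-t) / ((u - t) ^ 2 + w ^ 2)) (Ioi 0) := by
  refine (integrableOn_mul_exp_neg.div_const (w ^ 2)).mono'
    (Continuous.aestronglyMeasurable (by fun_prop (disch := intro t; positivity))) ?_
  filter_upwards [ae_restrict_mem measurableSet_Ioi] with t (ht : 0 < t)
  rw [Real.norm_eq_abs, abs_of_nonneg (by positivity)]
  gcongr
  nlinarith [sq_nonneg (u - t)]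

lemma integrableOn_mul_exp_neg_div_sub (u : ℝ) {w : ℝ} (hw : 0 < w) :
    IntegrableOn (fun t : ℝ => ((t * Real.exp (-t) : ℝ) : ℂ) / ((u : ℂ) + w * Complex.I - t))
      (Ioi 0) := by
  have hz (t : ℝ) : (u : ℂ) + w * Complex.I - t ≠ 0 := fun h => by
    simpa [hw.ne'] using congrArg Complex.im h
  refine (integrableOn_mul_exp_neg.const_mul w⁻¹).mono'
    (Continuous.aestronglyMeasurable (by fun_prop (disch := exact hz))) ?_
  filter_upwards [ae_restrict_mem measurableSet_Ioi] with t (ht : 0 < t)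
  have hw_le : w ≤ ‖(u : ℂ) + w * Complex.I - t‖ := by
    simpa [abs_of_pos hw] using Complex.abs_im_le_norm ((u : ℂ) + w * Complex.I - t)
  rw [norm_div, Complex.norm_real, Real.norm_eq_abs, abs_of_nonneg (by positivity),
    div_le_iff₀ (hw.trans_le hw_le)]
  calc t * Real.exp (-t) = w⁻¹ * (t * Real.exp (-t)) * w := by field_simp
    _ ≤ w⁻¹ * (t * Real.exp (-t)) * ‖(u : ℂ) + w * Complex.I - t‖ := by gcongr

lemma re_Hfun {α u w : ℝ} (hw : 0 < w) :
    (Hfun α (u + w * Complex.I)).re =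
      u + α + α * ∫ t in Ioi 0, t * Real.exp (-t) * (u - t) / ((u - t) ^ 2 + w ^ 2) := by
  have hint : (∫ t in Ioi (0:ℝ), ((t * Real.exp (-t) : ℝ) : ℂ) / ((u : ℂ) + w * Complex.I - t)).re
      = ∫ t in Ioi 0, t * Real.exp (-t) * (u - t) / ((u - t) ^ 2 + w ^ 2) := by
    rw [← RCLike.re_to_complex, ← integral_re (integrableOn_mul_exp_neg_div_sub u hw)]
    refine setIntegral_congr_fun measurableSet_Ioi fun t _ => ?_
    generalize t * Real.exp (-t) = φ
    simp [Complex.div_re, Complex.normSq_apply]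
    ring
  rw [Hfun, Complex.add_re, Complex.add_re, Complex.mul_re, hint]
  simp

lemma abs_integral_mul_exp_neg_mul_div_le {u w l : ℝ} (hw : 0 < w) (hl : 0 < l) :
    |∫ t in Ioi 0, t * Real.exp (-t) * (u - t) / ((u - t) ^ 2 + w ^ 2)| ≤
      l / 2 + Fint u w / (2 * l) := by
  have hbound : IntegrableOn (fun t : ℝ =>
      l / 2 * (t * Real.exp (-t)) + t * Real.exp (-t) / ((u - t) ^ 2 + w ^ 2) / (2 * l)) (Ioi 0) :=
    (integrableOn_mul_exp_neg.const_mul _).add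
      ((integrableOn_mul_exp_neg_div_sq_add_sq u hw).div_const _)
  rw [← Real.norm_eq_abs]
  refine (norm_integral_le_of_norm_le hbound ?_).trans_eq ?_
  · filter_upwards [ae_restrict_mem measurableSet_Ioi] with t (ht : 0 < t)
    have hD : 0 < (u - t) ^ 2 + w ^ 2 := by positivity
    rw [Real.norm_eq_abs, abs_div, abs_mul, abs_of_pos hD, abs_of_nonneg (by positivity),
      div_le_iff₀ hD]
    have hφ : 0 ≤ t * Real.exp (-t) := by positivity
    have key : 2 * l * |u - t| ≤ l ^ 2 * ((u - t) ^ 2 + w ^ 2) + 1 := by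
      nlinarith [sq_nonneg (l * |u - t| - 1), sq_abs (u - t), sq_nonneg (l * w)]
    field_simp
    nlinarith [mul_le_mul_of_nonneg_left key hφ]
  · rw [integral_add (integrableOn_mul_exp_neg.const_mul _)
      ((integrableOn_mul_exp_neg_div_sq_add_sq u hw).div_const _), integral_const_mul,
      integral_div, integral_mul_exp_neg, Fint, mul_one]

lemma abs_re_Hfun_sub_le {α u w : ℝ} (hα : 0 < α) (hw : 0 < w) (hF : Fint u w = 1 / α) :
    |(Hfun α (u + w * Complex.I)).re - u| ≤ α + √α := by
  have hr : 0 < √α := Real.sqrt_pos.2 hα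
  have hG := abs_integral_mul_exp_neg_mul_div_le (u := u) hw (inv_pos.2 hr)
  rw [hF] at hG
  rw [re_Hfun hw, add_assoc, add_sub_cancel_left]
  -- `l = α^{-1/2}` balances the two terms of the bound on the integral.
  calc |α + α * _|
        ≤ α + α * |∫ t in Ioi 0, t * Real.exp (-t) * (u - t) / ((u - t) ^ 2 + w ^ 2)| := by
        simpa [abs_mul, abs_of_pos hα] using abs_add_le α (α * _)
    _ ≤ α + α * ((√α)⁻¹ / 2 + 1 / α / (2 * (√α)⁻¹)) := by gcongr
    _ = α + √α := by
        field_simp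
        linear_combination -Real.sq_sqrt hα.le

lemma le_pi_mul_of_Fint_eq {α u w : ℝ} (hα : 0 < α) (hw : 0 < w) (hF : Fint u w = 1 / α) :
    w ≤ π * α := by
  have h := mul_Fint_le_pi u hw
  rwa [hF, mul_one_div, div_le_iff₀ hα] at h

section Subordination

variable {u w : ℝ → ℝ} {x : ℝ}

lemma tendsto_of_re_Hfun_eq
    (h : ∀ᶠ α in 𝓝[>] 0, 0 < w α ∧ Fint (u α) (w α) = 1 / α ∧
      (Hfun α (u α + w α * Complex.I)).re = x) :
    Tendsto u (𝓝[>] 0) (𝓝 x) ∧ Tendsto w (𝓝[>] 0) (𝓝[>] 0) := by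
  have h' := (eventually_mem_nhdsWithin (a := (0 : ℝ)) (s := Ioi 0)).and h
  have hsqrt : Tendsto (fun α => α + √α) (𝓝[>] 0) (𝓝 0) :=
    tendsto_nhdsWithin_of_tendsto_nhds
      (by simpa using (show Continuous fun α : ℝ => α + √α by fun_prop).tendsto 0)
  have hπα : Tendsto (fun α => π * α) (𝓝[>] 0) (𝓝 0) :=
    tendsto_nhdsWithin_of_tendsto_nhds (by simpa using (continuous_const_mul π).tendsto 0)
  refine ⟨tendsto_iff_dist_tendsto_zero.2
      (squeeze_zero' (.of_forall fun _ => dist_nonneg) ?_ hsqrt),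
    tendsto_nhdsWithin_iff.2 ⟨squeeze_zero' ?_ ?_ hπα, ?_⟩⟩ <;>
    filter_upwards [h'] with α ⟨hα, hw, hF, hre⟩
  · rw [Real.dist_eq, abs_sub_comm, ← hre]
    exact abs_re_Hfun_sub_le hα hw hF
  exacts [hw.le, le_pi_mul_of_Fint_eq hα hw hF, hw]

lemma tendsto_poissonKernelUHP_div_of_re_Hfun_eq (hx : 0 < x)
    (h : ∀ᶠ α in 𝓝[>] 0, 0 < w α ∧ Fint (u α) (w α) = 1 / α ∧
      (Hfun α (u α + w α * Complex.I)).re = x) :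
    Tendsto (fun α => poissonKernelUHP (w α) (u α) / α) (𝓝[>] 0)
      (𝓝 (π * (x⁻¹ * Real.exp (-x)))) := by
  obtain ⟨hu, hw⟩ := tendsto_of_re_Hfun_eq h
  have hlim := ((tendsto_mul_Fint hx).comp (hu.prodMk hw)).div
    ((hu.pow 2).add ((hw.mono_right nhdsWithin_le_nhds).pow 2)) (by positivity)
  rw [show π * (x * Real.exp (-x)) / (x ^ 2 + 0 ^ 2) = π * (x⁻¹ * Real.exp (-x)) by
    field_simp; ring] at hlim
  refine hlim.congr' ?_
  filter_upwards [h] with α ⟨_, hF, _⟩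
  simp only [Function.comp, Pi.div_apply, hF, poissonKernelUHP]
  ring

end Subordination

theorem free_gamma_density_small_alpha_limit_general
    (c : ℝ → ℝ) (v : ℝ → ℝ → ℝ) (P : ℝ → ℝ → ℝ) (Pinv : ℝ → ℝ → ℝ)
    (s : ℝ → ℝ) (f : ℝ → ℝ → ℝ)
    (hc : ∀ α : ℝ, 0 < α → 0 < c α ∧
      (∫ t in Set.Ioi (0:ℝ), t * Real.exp (-t) / (c α + t)^2) = 1/α)
    (hv0 : ∀ α : ℝ, 0 < α → ∀ x ≤ -(c α), v α x = 0)
    (hvpos : ∀ α : ℝ, 0 < α → ∀ x, -(c α) < x → 0 < v α x)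
    (hveq : ∀ α : ℝ, 0 < α → ∀ x, -(c α) < x → Fint x (v α x) = 1/α)
    (hP : ∀ α : ℝ, 0 < α → ∀ x : ℝ,
      ((P α x : ℝ) : ℂ) = Hfun α ((x : ℂ) + (v α x : ℝ) * Complex.I))
    (hPinv₂ : ∀ α : ℝ, 0 < α → Function.RightInverse (Pinv α) (P α))
    (hs : ∀ α : ℝ, 0 < α → s α = P α (-(c α)))
    (hf1 : ∀ α : ℝ, 0 < α → ∀ ξ, s α < ξ → f α ξ =
      (1 / Real.pi) * (v α (Pinv α ξ) / ((Pinv α ξ)^2 + (v α (Pinv α ξ))^2))) :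
    ∀ x : ℝ, 0 < x →
      Filter.Tendsto (fun α => f α x / α) (nhdsWithin 0 (Set.Ioi 0))
        (nhds (x⁻¹ * Real.exp (-x))) := by
  intro x hx
  have hP_re (α : ℝ) (hα : 0 < α) (y : ℝ) : P α y = (Hfun α (y + v α y * Complex.I)).re := by
    rw [← hP α hα y, Complex.ofReal_re]
  have hP_le (α : ℝ) (hα : 0 < α) (y : ℝ) (hy : y ≤ -(c α)) : P α y ≤ y + α := by
    rw [hP_re α hα, hv0 α hα y hy, Complex.ofReal_zero, zero_mul, add_zero]
    exact re_Hfun_ofReal_le hα.le (hy.trans (neg_nonpos.2 (hc α hα).1.le))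
  have hsol : ∀ᶠ α in 𝓝[>] 0, (0 < v α (Pinv α x) ∧ Fint (Pinv α x) (v α (Pinv α x)) = 1 / α ∧
      (Hfun α (Pinv α x + v α (Pinv α x) * Complex.I)).re = x) ∧
      f α x = π⁻¹ * poissonKernelUHP (v α (Pinv α x)) (Pinv α x) := by
    filter_upwards [Ioo_mem_nhdsGT hx] with α ⟨hα, hαx⟩
    have hPx : P α (Pinv α x) = x := hPinv₂ α hα x
    have hcu : -(c α) < Pinv α x := by
      by_contra! hle
      linarith [hP_le α hα _ hle, (hc α hα).1]
    have hsx : s α < x := by linarith [hs α hα, hP_le α hα _ le_rfl, (hc α hα).1]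
    refine ⟨⟨hvpos α hα _ hcu, hveq α hα _ hcu, by rw [← hP_re α hα, hPx]⟩, ?_⟩
    rw [hf1 α hα x hsx, one_div, poissonKernelUHP]
  have hlim :=
    (tendsto_poissonKernelUHP_div_of_re_Hfun_eq hx (hsol.mono fun _ h => h.1)).const_mul π⁻¹
  rw [inv_mul_cancel_left₀ Real.pi_ne_zero] at hlim
  refine hlim.congr' (hsol.mono fun α h => ?_)
  simp only [h.2, mul_div_assoc]

/-- for each `x > 0`, `lim_{α ↓ 0} f_α(x)/α = x⁻¹ e^{-x}`. -/
theorem free_gamma_density_small_alpha_limit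
    (c : ℝ → ℝ) (v : ℝ → ℝ → ℝ) (P : ℝ → ℝ → ℝ) (Pinv : ℝ → ℝ → ℝ)
    (s : ℝ → ℝ) (f : ℝ → ℝ → ℝ)
    (hc : ∀ α : ℝ, 0 < α → 0 < c α ∧
      (∫ t in Set.Ioi (0:ℝ), t * Real.exp (-t) / (c α + t)^2) = 1/α)
    (hv0 : ∀ α : ℝ, 0 < α → ∀ x ≤ -(c α), v α x = 0)
    (hvpos : ∀ α : ℝ, 0 < α → ∀ x, -(c α) < x → 0 < v α x)
    (hveq : ∀ α : ℝ, 0 < α → ∀ x, -(c α) < x → Fint x (v α x) = 1/α)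
    (hvuniq : ∀ α : ℝ, 0 < α → ∀ x, -(c α) < x →
      ∀ y, 0 < y → Fint x y = 1/α → y = v α x)
    (hP : ∀ α : ℝ, 0 < α → ∀ x : ℝ,
      ((P α x : ℝ) : ℂ) = Hfun α ((x : ℂ) + (v α x : ℝ) * Complex.I))
    (hPinv₁ : ∀ α : ℝ, 0 < α → Function.LeftInverse (Pinv α) (P α))
    (hPinv₂ : ∀ α : ℝ, 0 < α → Function.RightInverse (Pinv α) (P α))
    (hs : ∀ α : ℝ, 0 < α → s α = P α (-(c α)))
    (hf0 : ∀ α : ℝ, 0 < α → ∀ ξ ≤ s α, f α ξ = 0)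
    (hf1 : ∀ α : ℝ, 0 < α → ∀ ξ, s α < ξ → f α ξ =
      (1 / Real.pi) * (v α (Pinv α ξ) / ((Pinv α ξ)^2 + (v α (Pinv α ξ))^2))) :
    ∀ x : ℝ, 0 < x →
      Filter.Tendsto (fun α => f α x / α) (nhdsWithin 0 (Set.Ioi 0))
        (nhds (x⁻¹ * Real.exp (-x))) :=
  free_gamma_density_small_alpha_limit_general c v P Pinv s f hc hv0 hvpos hveq hP hPinv₂ hs hf1
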